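/- (Theorem B.2 of the paper, combinatorial form.) Suppose n ≥ 3 and every directed sub-block of D has at least n vertices, and let x ∈ ℕ with x < n − 2. Then for every connected pair W ⊆ V, every j ∈ W and every k ∈ V ∖ W with (k, j) ∈ A, the vertex j is cycle-partitioning at order x with respect to {k} and W ∖ {j}; consequently no set W ⊆ V with |W| ≥ 3 is x-generable. -/

import Mathlib

open Set

variable {V : Type*}

/-- One arc step within the induced subgraph on the vertex set `S`. -/
def StepIn (A : V → V → Prop) (S : Set V) (u v : V) : Prop :=
  u ∈ S ∧ v ∈ S ∧ A u v

/-- `v` is reachable from `u` by a directed path in the induced subgraph on `S`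
(every vertex is reachable from itself, provided it lies in `S`). -/
def ReachIn (A : V → V → Prop) (S : Set V) (u v : V) : Prop :=
  u ∈ S ∧ Relation.ReflTransGen (StepIn A S) u v

/-- `IN(X)`: the set of vertices from which some member of `X` is reachable,
computed in the induced subgraph on `S`. -/
def InSet (A : V → V → Prop) (S : Set V) (X : Set V) : Set V :=
  {u | ∃ x ∈ X, ReachIn A S u x}

/-- `Z` is dynamically partitioning with respect to `X` and `Y`:
`IN(X) ∩ IN(Y) = ∅` computed in the induced subgraph `D − Z`. -/
def DynPart (A : V → V → Prop) (X Y Z : Set V) : Prop :=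
  InSet A Zᶜ X ∩ InSet A Zᶜ Y = ∅

/-- `StepsLe r n u v`: `v` can be reached from `u` in at most `n` `r`-steps. -/
def StepsLe (r : V → V → Prop) : ℕ → V → V → Prop
  | 0, u, v => u = v
  | n + 1, u, v => u = v ∨ ∃ w, r u w ∧ StepsLe r n w v

/-- `v` is reachable from `u` by a directed path using at most `n` arcs
in the induced subgraph on `S`. -/
def ReachInLe (A : V → V → Prop) (S : Set V) (n : ℕ) (u v : V) : Prop :=
  u ∈ S ∧ StepsLe (StepIn A S) n u v

/-- `IN_a(X)` computed in the induced subgraph on `S`. -/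
def InSetLe (A : V → V → Prop) (S : Set V) (a : ℕ) (X : Set V) : Set V :=
  {u | ∃ x ∈ X, ReachInLe A S a u x}

/-- The vertex `i` is cycle-partitioning at order `x` with respect to `X` and `Y`:
`IN_a(X) ∩ IN_b(Y) = ∅` in `D − {i}` for all `a + b = x`. -/
def CyclePart (A : V → V → Prop) (X Y : Set V) (i : V) (x : ℕ) : Prop :=
  ∀ a b : ℕ, a + b = x → InSetLe A {i}ᶜ a X ∩ InSetLe A {i}ᶜ b Y = ∅

/-- One adjacency step of the underlying (simple) graph of `D[W]`. -/
def UStep (A : V → V → Prop) (W : Set V) (u v : V) : Prop :=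
  u ∈ W ∧ v ∈ W ∧ u ≠ v ∧ (A u v ∨ A v u)

/-- The underlying graph of `D[W]` is connected. -/
def UConnected (A : V → V → Prop) (W : Set V) : Prop :=
  W.Nonempty ∧ ∀ u ∈ W, ∀ v ∈ W, Relation.ReflTransGen (UStep A W) u v

/-- The underlying graph of `D[W]` is biconnected: at least 3 vertices, connected,
and deleting any single vertex leaves a connected graph. -/
def Biconnected (A : V → V → Prop) (W : Set V) : Prop :=
  3 ≤ W.ncard ∧ UConnected A W ∧ ∀ v ∈ W, UConnected A (W \ {v})

/-- `D[W]` is a directed sub-block: some vertex of `W` is reachable in `D[W]` from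
every other vertex of `W`, and the underlying graph of `D[W]` is biconnected. -/
def DirectedSubBlock (A : V → V → Prop) (W : Set V) : Prop :=
  (∃ i ∈ W, ∀ j ∈ W, ReachIn A W j i) ∧ Biconnected A W

/-- A directed sub-block is a transmission block iff it is maximal. -/
def TransmissionBlock (A : V → V → Prop) (W : Set V) : Prop :=
  DirectedSubBlock A W ∧ ∀ U : Set V, W ⊂ U → ¬ DirectedSubBlock A U

/-- A connected pair: a two-element set `{i, j}` with an arc between `i` and `j`. -/
def ConnectedPair (A : V → V → Prop) (W : Set V) : Prop :=
  ∃ i j : V, i ≠ j ∧ W = {i, j} ∧ (A i j ∨ A j i)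

/-- `W'` is obtained from `W` by one exact generation step. -/
def ExactStep (A : V → V → Prop) (W W' : Set V) : Prop :=
  ∃ k, k ∉ W ∧ W' = W ∪ {k} ∧ ∃ j ∈ W, A k j ∧ ¬ DynPart A {k} (W \ {j}) {j}

/-- `W` is the last term of a finite chain of exact generation steps whose
first term is a connected pair. -/
def GeneratedFromPair (A : V → V → Prop) (W : Set V) : Prop :=
  ∃ P : Set V, ConnectedPair A P ∧ Relation.ReflTransGen (ExactStep A) P W

/-- `W'` is obtained from `W` by one order-`x` cycle generation step. -/
def CycleStep (A : V → V → Prop) (x : ℕ) (W W' : Set V) : Prop :=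
  ∃ k, k ∉ W ∧ W' = W ∪ {k} ∧ ∃ j ∈ W, A k j ∧ ¬ CyclePart A {k} (W \ {j}) j x

/-- `W` is the last term of a finite chain of order-`x` cycle generation steps
whose first term is a connected pair. -/
def XGenerable (A : V → V → Prop) (x : ℕ) (W : Set V) : Prop :=
  ∃ P : Set V, ConnectedPair A P ∧ Relation.ReflTransGen (CycleStep A x) P W

/-!
Suppose some `v` in `D − {j}` reaches `k` within `a` arcs and `m` within `b` arcs, with
`a + b = x`. Shortcutting the two walks, and restarting both at a common vertex as long as
they share one, yields paths from a vertex `u` to `k` and to `m` that meet only in `u` and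
avoid `j`. Closed up by the arcs `k → j` and `j — m` they form a cycle on at most
`x + 2 < n` vertices. A cycle is biconnected, and `m` (if `j → m`) or `j` (if `m → j`) is
reachable from all of its vertices, so it is a directed sub-block with fewer than `n`
vertices. An `x`-generable set of size at least `3` would need a first generation step out
of a connected pair, which this rules out.
-/

open List

section Walks

variable {α : Type*} {r s : α → α → Prop}

/-- `u :: l` is an `r`-chain from `u` to `v`; it has `l.length` steps. -/
def IsWalk (r : α → α → Prop) (u : α) (l : List α) (v : α) : Prop :=
  IsChain r (u :: l) ∧ (u :: l).getLast (cons_ne_nil u l) = v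

theorem isWalk_cons {u w v : α} {l : List α} :
    IsWalk r u (w :: l) v ↔ r u w ∧ IsWalk r w l v := by
  simp only [IsWalk, isChain_cons_cons, getLast_cons_cons, and_assoc]

theorem IsWalk.imp {u v : α} {l : List α} (H : ∀ a b, r a b → s a b) (h : IsWalk r u l v) :
    IsWalk s u l v :=
  ⟨h.1.imp H, h.2⟩

theorem StepsLe.exists_isWalk : ∀ {n : ℕ} {u v : α}, StepsLe r n u v →
    ∃ l, IsWalk r u l v ∧ l.length ≤ n
  | 0, u, _, rfl => ⟨[], ⟨isChain_singleton u, rfl⟩, le_rfl⟩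
  | _ + 1, u, _, Or.inl rfl => ⟨[], ⟨isChain_singleton u, rfl⟩, Nat.zero_le _⟩
  | _ + 1, _, _, Or.inr ⟨_, huw, h⟩ =>
    let ⟨_, hl, hlen⟩ := StepsLe.exists_isWalk h
    ⟨_, isWalk_cons.mpr ⟨huw, hl⟩, Nat.succ_le_succ hlen⟩

theorem IsWalk.exists_suffix {u w v : α} {l : List α} (h : IsWalk r u l v) (hw : w ∈ l) :
    ∃ t, IsWalk r w t v ∧ w :: t <:+ l := by
  obtain ⟨l₁, t, rfl⟩ := append_of_mem hw
  refine ⟨t, ⟨(isChain_cons_split.mp h.1).2, ?_⟩, suffix_append l₁ _⟩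
  simpa [getLast_append_of_ne_nil] using h.2

theorem IsWalk.exists_nodup {u v : α} {l : List α} (h : IsWalk r u l v) :
    ∃ l', IsWalk r u l' v ∧ (u :: l').Nodup ∧ l'.length ≤ l.length := by
  induction l generalizing u with
  | nil => exact ⟨[], h, nodup_singleton u, le_rfl⟩
  | cons b t ih =>
    obtain ⟨hub, hb⟩ := isWalk_cons.mp h
    obtain ⟨t', ht', hnd, hlen⟩ := ih hb
    have hwalk := isWalk_cons.mpr ⟨hub, ht'⟩
    by_cases hu : u ∈ b :: t'
    · -- cut the walk at its later visit of `u`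
      obtain ⟨t'', ht'', hsuf⟩ := hwalk.exists_suffix hu
      have : t''.length ≤ t'.length := Nat.le_of_succ_le_succ hsuf.length_le
      exact ⟨t'', ht'', hnd.sublist hsuf.sublist, by simp only [length_cons]; omega⟩
    · exact ⟨b :: t', hwalk, nodup_cons.mpr ⟨hu, hnd⟩, by simpa using hlen⟩

theorem IsWalk.exists_disjoint {u k m : α} {p q : List α}
    (hp : IsWalk r u p k) (hq : IsWalk r u q m) :
    ∃ w p' q', IsWalk r w p' k ∧ IsWalk r w q' m ∧ (w :: (p' ++ q')).Nodup ∧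
      p'.length + q'.length ≤ p.length + q.length := by
  obtain ⟨p₁, hp₁, hndp, hlenp⟩ := hp.exists_nodup
  obtain ⟨q₁, hq₁, hndq, hlenq⟩ := hq.exists_nodup
  by_cases hcommon : ∃ w ∈ p₁, w ∈ q₁
  · -- restarting both walks at a common vertex strictly shortens them
    obtain ⟨w, hwp, hwq⟩ := hcommon
    obtain ⟨p₂, hp₂, hsufp⟩ := hp₁.exists_suffix hwp
    obtain ⟨q₂, hq₂, hsufq⟩ := hq₁.exists_suffix hwq
    have hltp : p₂.length < p₁.length := hsufp.length_le
    have hltq : q₂.length < q₁.length := hsufq.length_le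
    obtain ⟨w', p', q', hp', hq', hnd, hlen⟩ := hp₂.exists_disjoint hq₂
    exact ⟨w', p', q', hp', hq', hnd, by omega⟩
  · refine ⟨u, p₁, q₁, hp₁, hq₁, ?_, by omega⟩
    rw [nodup_cons] at hndp hndq ⊢
    refine ⟨by simp [hndp.1, hndq.1], nodup_append.mpr ⟨hndp.2, hndq.2, ?_⟩⟩
    exact fun a ha b hb hab => hcommon ⟨a, ha, hab ▸ hb⟩
termination_by p.length + q.length
decreasing_by omega

theorem IsWalk.reflTransGen {u v : α} {l : List α} (h : IsWalk r u l v) :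
    ∀ w ∈ u :: l, Relation.ReflTransGen r w v :=
  h.1.backwards_cons_induction _ _ h.2 (fun _ _ hxy hy => hy.head hxy) .refl

theorem List.IsChain.and_ne_of_nodup {l : List α} (h : IsChain r l) (hnd : l.Nodup) :
    IsChain (fun x y => x ≠ y ∧ r x y) l := by
  induction h with
  | nil => exact .nil
  | singleton a => exact .singleton a
  | cons_cons hab _ ih =>
    rw [nodup_cons] at hnd
    exact (ih hnd.2).cons_cons ⟨fun he => hnd.1 (he ▸ mem_cons_self), hab⟩

theorem List.Nodup.ncard_setOf_mem {l : List α} (h : l.Nodup) :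
    {w | w ∈ l}.ncard = l.length := by
  classical
  rw [← coe_toFinset, Set.ncard_coe_finset, toFinset_card_of_nodup h]

end Walks

section Graph

variable {A : V → V → Prop}

theorem IsWalk.forall_mem_of_head_mem {T : Set V} {u v : V} {l : List V}
    (h : IsWalk (StepIn A T) u l v) (hu : u ∈ T) : ∀ w ∈ u :: l, w ∈ T :=
  h.1.induction _ _ (fun _ _ hxy _ => hxy.2.1) (fun _ => hu)

theorem IsWalk.forall_mem_of_last_mem {T : Set V} {u v : V} {l : List V}
    (h : IsWalk (StepIn A T) u l v) (hv : v ∈ T) : ∀ w ∈ u :: l, w ∈ T :=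
  h.1.backwards_cons_induction _ _ h.2 (fun _ _ hxy _ => hxy.1) hv

theorem IsWalk.reflTransGen_stepIn {S : Set V} {u v : V} {l : List V} (h : IsWalk A u l v)
    (hS : ∀ w ∈ u :: l, w ∈ S) : ∀ w ∈ u :: l, Relation.ReflTransGen (StepIn A S) w v :=
  IsWalk.reflTransGen
    ⟨(IsChain.iff_mem.mp h.1).imp fun _ _ ⟨hx, hy, hxy⟩ => ⟨hS _ hx, hS _ hy, hxy⟩, h.2⟩

instance {W : Set V} : Std.Symm (UStep A W) :=
  ⟨fun _ _ ⟨hu, hv, hne, h⟩ => ⟨hv, hu, hne.symm, h.symm⟩⟩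

theorem uConnected_of_isChain {l : List V} (hne : l ≠ []) (hnd : l.Nodup)
    (hl : IsChain (fun x y => A x y ∨ A y x) l) : UConnected A {w | w ∈ l} := by
  have hstep : IsChain (UStep A {w | w ∈ l}) l := IsChain.iff_mem.mp (hl.and_ne_of_nodup hnd)
  have hreach : ∀ w ∈ l, Relation.ReflTransGen (UStep A {w | w ∈ l}) (l.head hne) w :=
    hstep.induction _ _ (fun _ _ hxy hx => hx.tail hxy) fun _ => .refl
  refine ⟨⟨_, head_mem hne⟩, fun u hu v hv => ?_⟩
  exact (Std.Symm.symm _ _ (hreach u hu)).trans (hreach v hv)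

theorem biconnected_of_cycle {c : List V} (hnd : c.Nodup) (h3 : 3 ≤ c.length)
    (hc : Cycle.Chain (fun x y => A x y ∨ A y x) (c : Cycle V)) :
    Biconnected A {w | w ∈ c} := by
  refine ⟨hnd.ncard_setOf_mem ▸ h3, ?_, fun v hv => ?_⟩
  · obtain ⟨a, l, rfl⟩ := exists_cons_of_length_pos (by omega : 0 < c.length)
    rw [Cycle.chain_coe_cons] at hc
    exact uConnected_of_isChain (cons_ne_nil a l) hnd (by simpa using hc.left_of_append)
  · -- rotate the cycle to start at `v`; the rest of it is a path through `c \ {v}`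
    obtain ⟨s, t, rfl⟩ := append_of_mem hv
    have hrot : (s ++ v :: t) ~r v :: (t ++ s) := by
      simpa using isRotated_append (l := s) (l' := v :: t)
    rw [Cycle.coe_eq_coe.mpr hrot, Cycle.chain_coe_cons] at hc
    have hnd' := hrot.nodup_iff.mp hnd
    have hset : {w | w ∈ s ++ v :: t} \ {v} = {w | w ∈ t ++ s} := by
      ext w
      exact ⟨fun ⟨h, hne⟩ => (mem_cons.mp (hrot.mem_iff.mp h)).resolve_left hne, fun h =>
        ⟨hrot.mem_iff.mpr (mem_cons_of_mem _ h), fun he => (nodup_cons.mp hnd').1 (he ▸ h)⟩⟩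
    rw [hset]
    refine uConnected_of_isChain ?_ (nodup_cons.mp hnd').2 (isChain_cons.mp hc).2.left_of_append
    exact ne_nil_of_length_pos (by simp only [length_append, length_cons] at h3 ⊢; omega)

theorem exists_directedSubBlock_of_walks {j k m u : V} {p q : List V}
    (hp : IsWalk A u p k) (hq : IsWalk A u q m) (hnd : (j :: u :: (p ++ q)).Nodup)
    (hkj : A k j) (hjm : A j m ∨ A m j) (hkm : k ≠ m) :
    ∃ U, DirectedSubBlock A U ∧ U.ncard = p.length + q.length + 2 := by
  -- the cycle runs from `u` along `q` to `m`, through `j` to `k`, and back along `p` to `u`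
  set c := u :: (q ++ j :: p.reverse) with hc
  have hcnd : c.Nodup := by
    simp only [c, nodup_cons, nodup_append, mem_append, mem_cons, mem_reverse, nodup_reverse]
      at hnd ⊢
    grind
  have hmem : ∀ w, w ∈ c ↔ w ∈ u :: p ∨ w ∈ u :: q ∨ w = j := by
    intro w
    simp only [c, mem_cons, mem_append, mem_reverse]
    tauto
  have hlen : c.length = p.length + q.length + 2 := by
    simp only [c, length_cons, length_append, length_reverse]
    omega
  have hpS : ∀ w ∈ u :: p, w ∈ {w | w ∈ c} := fun w hw => (hmem w).2 (.inl hw)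
  have hqS : ∀ w ∈ u :: q, w ∈ {w | w ∈ c} := fun w hw => (hmem w).2 (.inr (.inl hw))
  have hjS : j ∈ {w | w ∈ c} := (hmem j).2 (.inr (.inr rfl))
  have hkp : k ∈ u :: p := hp.2 ▸ getLast_mem _
  have hmq : m ∈ u :: q := hq.2 ▸ getLast_mem _
  refine ⟨{w | w ∈ c}, ⟨?sink, biconnected_of_cycle hcnd ?three ?cycle⟩,
    hcnd.ncard_setOf_mem.trans hlen⟩
  case sink =>
    have hreachp := hp.reflTransGen_stepIn hpS
    have hreachq := hq.reflTransGen_stepIn hqS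
    have hkj' : StepIn A {w | w ∈ c} k j := ⟨hpS k hkp, hjS, hkj⟩
    rcases hjm with hjm | hmj
    · have hjm' : Relation.ReflTransGen (StepIn A {w | w ∈ c}) j m :=
        .single ⟨hjS, hqS m hmq, hjm⟩
      refine ⟨m, hqS m hmq, fun w hw => ⟨hw, ?_⟩⟩
      rcases (hmem w).1 hw with hw | hw | rfl
      · exact ((hreachp w hw).tail hkj').trans hjm'
      · exact hreachq w hw
      · exact hjm'
    · refine ⟨j, hjS, fun w hw => ⟨hw, ?_⟩⟩
      rcases (hmem w).1 hw with hw | hw | rfl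
      · exact (hreachp w hw).tail hkj'
      · exact (hreachq w hw).tail ⟨hqS m hmq, hjS, hmj⟩
      · exact .refl
  case three =>
    have : p ≠ [] ∨ q ≠ [] := by
      by_contra! h
      obtain ⟨rfl, rfl⟩ := h
      exact hkm (hp.2.symm.trans hq.2)
    rcases this with h | h <;> have := length_pos_of_ne_nil h <;> omega
  case cycle =>
    have hsplit : u :: (q ++ j :: p.reverse ++ [u]) = (u :: q) ++ j :: (u :: p).reverse := by
      simp
    rw [hc, Cycle.chain_coe_cons, hsplit, isChain_split]
    refine ⟨isChain_append.mpr ⟨hq.1.imp fun _ _ h => .inl h, isChain_singleton j, ?_⟩,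
      isChain_cons.mpr ⟨?_, isChain_reverse.mpr (hp.1.imp fun _ _ h => .inr h)⟩⟩
    · intro x hx y hy
      rw [getLast?_eq_some_getLast (cons_ne_nil u q), hq.2, Option.mem_some_iff] at hx
      rw [head?_cons, Option.mem_some_iff] at hy
      exact hx ▸ hy ▸ hjm.symm
    · intro y hy
      rw [head?_reverse, getLast?_eq_some_getLast (cons_ne_nil u p), hp.2, Option.mem_some_iff]
        at hy
      exact hy ▸ .inr hkj

theorem cyclePart_of_add_two_lt {n x : ℕ} {j k m : V}
    (hblocks : ∀ U : Set V, DirectedSubBlock A U → n ≤ U.ncard) (hx : x + 2 < n)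
    (hkj : A k j) (hjm : A j m ∨ A m j) (hkm : k ≠ m) : CyclePart A {k} {m} j x := by
  intro a b hab
  refine Set.eq_empty_iff_forall_notMem.mpr ?_
  rintro v ⟨⟨k', hk', hv, hva⟩, ⟨m', hm', -, hvb⟩⟩
  rw [Set.mem_singleton_iff] at hk' hm'
  rw [hk'] at hva
  rw [hm'] at hvb
  obtain ⟨p, hp, hpa⟩ := hva.exists_isWalk
  obtain ⟨q, hq, hqb⟩ := hvb.exists_isWalk
  obtain ⟨u, p', q', hp', hq', hnd, hlen⟩ := hp.exists_disjoint hq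
  have hk : k ∈ ({j}ᶜ : Set V) := hp.forall_mem_of_head_mem hv k (hp.2 ▸ getLast_mem _)
  have hm : m ∈ ({j}ᶜ : Set V) := hq.forall_mem_of_head_mem hv m (hq.2 ▸ getLast_mem _)
  have hj : j ∉ u :: (p' ++ q') := by
    intro h
    have : j ∈ u :: p' ∨ j ∈ u :: q' := by
      simp only [mem_cons, mem_append] at h ⊢
      tauto
    rcases this with h | h
    · exact hp'.forall_mem_of_last_mem hk j h rfl
    · exact hq'.forall_mem_of_last_mem hm j h rfl
  obtain ⟨U, hU, hcard⟩ := exists_directedSubBlock_of_walks (hp'.imp fun _ _ h => h.2.2)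
    (hq'.imp fun _ _ h => h.2.2) (nodup_cons.mpr ⟨hj, hnd⟩) hkj hjm hkm
  have := hblocks U hU
  omega

theorem ConnectedPair.exists_sdiff_eq_singleton {W : Set V} (hW : ConnectedPair A W) {j : V}
    (hj : j ∈ W) : ∃ m ∈ W, W \ {j} = {m} ∧ (A j m ∨ A m j) := by
  obtain ⟨i, i', hne, rfl, h⟩ := hW
  rcases hj with rfl | rfl
  · exact ⟨i', by simp, Set.pair_sdiff_left hne, h⟩
  · exact ⟨i, by simp, Set.pair_sdiff_right hne, h.symm⟩

end Graph

theorem stmt16_general (A : V → V → Prop)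
    (n : ℕ)
    (hblocks : ∀ U : Set V, DirectedSubBlock A U → n ≤ U.ncard)
    (x : ℕ) (hx : x < n - 2) :
    (∀ W : Set V, ConnectedPair A W → ∀ j ∈ W, ∀ k, k ∉ W → A k j →
      CyclePart A {k} (W \ {j}) j x) ∧
    (∀ W : Set V, 3 ≤ W.ncard → ¬ XGenerable A x W) := by
  have hpair : ∀ W : Set V, ConnectedPair A W → ∀ j ∈ W, ∀ k, k ∉ W → A k j →
      CyclePart A {k} (W \ {j}) j x := by
    intro W hW j hj k hk hkj
    obtain ⟨m, hm, hWj, hjm⟩ := hW.exists_sdiff_eq_singleton hj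
    rw [hWj]
    exact cyclePart_of_add_two_lt hblocks (by omega) hkj hjm fun h => hk (h ▸ hm)
  refine ⟨hpair, fun W h3 ⟨P, hP, hchain⟩ => ?_⟩
  rcases hchain.cases_head with rfl | ⟨_, ⟨k, hk, -, j, hj, hkj, hnot⟩, -⟩
  · obtain ⟨i, i', hne, rfl, -⟩ := hP
    rw [Set.ncard_pair hne] at h3
    omega
  · exact hnot (hpair P hP j hj k hk hkj)

/-- Theorem B.2, combinatorial form. -/
theorem stmt16 [Fintype V] (A : V → V → Prop) (hirr : ∀ v : V, ¬ A v v)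
    (n : ℕ) (hn : 3 ≤ n)
    (hblocks : ∀ U : Set V, DirectedSubBlock A U → n ≤ U.ncard)
    (x : ℕ) (hx : x < n - 2) :
    (∀ W : Set V, ConnectedPair A W → ∀ j ∈ W, ∀ k, k ∉ W → A k j →
      CyclePart A {k} (W \ {j}) j x) ∧
    (∀ W : Set V, 3 ≤ W.ncard → ¬ XGenerable A x W) :=
  stmt16_general A n hblocks x hx
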